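/- arXiv:1808.00281 — 10 statements merged into one kernel-verified Lean document; each statement's English description precedes it below -/
import Mathlib

section
/- Let A be an n×n real matrix and D an n×n positive diagonal matrix. Then A is a semimonotone star matrix if and only if DAD^T is a semimonotone star matrix. -/
/-- A is semimonotone (E₀). -/
def IsSemimonotone {n : ℕ} (A : Matrix (Fin n) (Fin n) ℝ) : Prop :=
  ∀ x : Fin n → ℝ, 0 ≤ x → x ≠ 0 → ∃ i, 0 < x i ∧ 0 ≤ A.mulVec x i

/-- A is semimonotone star (E₀ˢ). -/
def IsSemimonotoneStar {n : ℕ} (A : Matrix (Fin n) (Fin n) ℝ) : Prop :=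
  IsSemimonotone A ∧
    ∀ x : Fin n → ℝ, 0 ≤ x → 0 ≤ A.mulVec x → dotProduct x (A.mulVec x) = 0 →
      A.transpose.mulVec x ≤ 0

/-! Conjugating by a positive diagonal matrix `diagonal d` amounts to the change of variables
`x ↦ d * x`, a bijection of the nonnegative orthant that preserves supports, followed by
rescaling the rows by `d`, which preserves signs. The converse direction is the same statement
for the inverse scaling `d⁻¹`. -/

open Matrix

namespace Matrix

variable {ι R : Type*} [Fintype ι] [DecidableEq ι] [CommSemiring R]

lemma diagonal_mul_mul_diagonal_mulVec (A : Matrix ι ι R) (d x : ι → R) :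
    (diagonal d * A * diagonal d) *ᵥ x = d * A *ᵥ (d * x) := by
  have hdiag : ∀ v : ι → R, diagonal d *ᵥ v = d * v := fun v => funext (mulVec_diagonal d v)
  rw [← mulVec_mulVec, ← mulVec_mulVec, hdiag, hdiag]

lemma dotProduct_diagonal_mul_mul_diagonal_mulVec (A : Matrix ι ι R) (d x : ι → R) :
    x ⬝ᵥ (diagonal d * A * diagonal d) *ᵥ x = (d * x) ⬝ᵥ A *ᵥ (d * x) := by
  rw [diagonal_mul_mul_diagonal_mulVec]
  exact Finset.sum_congr rfl fun i _ => by simp only [Pi.mul_apply]; ring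

lemma transpose_diagonal_mul_mul_diagonal (A : Matrix ι ι R) (d : ι → R) :
    (diagonal d * A * diagonal d)ᵀ = diagonal d * Aᵀ * diagonal d := by
  simp only [transpose_mul, diagonal_transpose, Matrix.mul_assoc]

end Matrix

section PositiveScaling

lemma Pi.mul_nonneg_iff_of_pos_left {ι : Type*} {d x : ι → ℝ} (hd : ∀ i, 0 < d i) :
    0 ≤ d * x ↔ 0 ≤ x :=
  forall_congr' fun i => _root_.mul_nonneg_iff_of_pos_left (hd i)

lemma Pi.mul_eq_zero_iff_of_pos_left {ι : Type*} {d x : ι → ℝ} (hd : ∀ i, 0 < d i) :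
    d * x = 0 ↔ x = 0 := by
  simp only [funext_iff, Pi.mul_apply, Pi.zero_apply, mul_eq_zero, (hd _).ne', false_or]

variable {n : ℕ} {d : Fin n → ℝ}

lemma IsSemimonotone.diagonal_mul_mul_diagonal {A : Matrix (Fin n) (Fin n) ℝ}
    (hA : IsSemimonotone A) (hd : ∀ i, 0 < d i) :
    IsSemimonotone (diagonal d * A * diagonal d) := by
  intro x hx hx0
  obtain ⟨i, hxi, hAxi⟩ := hA (d * x) ((Pi.mul_nonneg_iff_of_pos_left hd).2 hx)
    (mt (Pi.mul_eq_zero_iff_of_pos_left hd).1 hx0)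
  refine ⟨i, (mul_pos_iff_of_pos_left (hd i)).1 hxi, ?_⟩
  rw [diagonal_mul_mul_diagonal_mulVec]
  exact mul_nonneg (hd i).le hAxi

lemma IsSemimonotoneStar.diagonal_mul_mul_diagonal {A : Matrix (Fin n) (Fin n) ℝ}
    (hA : IsSemimonotoneStar A) (hd : ∀ i, 0 < d i) :
    IsSemimonotoneStar (diagonal d * A * diagonal d) := by
  refine ⟨hA.1.diagonal_mul_mul_diagonal hd, fun x hx hAx hxAx => ?_⟩
  rw [diagonal_mul_mul_diagonal_mulVec, Pi.mul_nonneg_iff_of_pos_left hd] at hAx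
  rw [dotProduct_diagonal_mul_mul_diagonal_mulVec] at hxAx
  have hATx := hA.2 (d * x) ((Pi.mul_nonneg_iff_of_pos_left hd).2 hx) hAx hxAx
  rw [transpose_diagonal_mul_mul_diagonal, diagonal_mul_mul_diagonal_mulVec]
  exact fun i => mul_nonpos_of_nonneg_of_nonpos (hd i).le (hATx i)

lemma isSemimonotoneStar_diagonal_mul_mul_diagonal_iff {A : Matrix (Fin n) (Fin n) ℝ}
    (hd : ∀ i, 0 < d i) :
    IsSemimonotoneStar (diagonal d * A * diagonal d) ↔ IsSemimonotoneStar A := by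
  refine ⟨fun h => ?_, fun h => h.diagonal_mul_mul_diagonal hd⟩
  have hinv : ∀ u v : Fin n → ℝ, (∀ i, u i * v i = 1) → diagonal u * diagonal v = 1 :=
    fun _ _ huv => by rw [diagonal_mul_diagonal, funext huv, diagonal_one]
  have hA : diagonal d⁻¹ * (diagonal d * A * diagonal d) * diagonal d⁻¹ = A := by
    simp only [Matrix.mul_assoc, hinv d d⁻¹ fun i => mul_inv_cancel₀ (hd i).ne', Matrix.mul_one]
    rw [← Matrix.mul_assoc, hinv d⁻¹ d fun i => inv_mul_cancel₀ (hd i).ne', Matrix.one_mul]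
  rw [← hA]
  exact h.diagonal_mul_mul_diagonal fun i => inv_pos.2 (hd i)

end PositiveScaling

theorem stmt1 {n : ℕ} (A D : Matrix (Fin n) (Fin n) ℝ)
    (hD : D.IsDiag) (hDpos : ∀ i, 0 < D i i) :
    IsSemimonotoneStar A ↔ IsSemimonotoneStar (D * A * D.transpose) := by
  rw [← hD.diagonal_diag, diagonal_transpose]
  exact (isSemimonotoneStar_diagonal_mul_mul_diagonal_iff hDpos).symm
end

section
/- The 3×3 matrix A = [[0,1,1],[2,0,1],[-1,-1,0]] is a semimonotone star matrix, but its transpose Aᵀ is not a semimonotone star matrix. -/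
/-! `A` has a nonnegative upper triangle, diagonal included, so at the first positive coordinate
`i` of `x ≥ 0` only entries `A i j` with `i ≤ j` meet nonzero coordinates and `(A x)_i ≥ 0`.
The last row `(-1, -1, 0)` of `A` forces `x₀ = x₁ = 0` whenever `x ≥ 0` and `A x ≥ 0`, and then
`Aᵀ x = x₂ • (-1, -1, 0) ≤ 0`. For `Aᵀ` the unit vector `e₀` is a counterexample:
`Aᵀ e₀ = (0, 1, 1) ≥ 0` and `e₀ ⬝ Aᵀ e₀ = 0`, but `A e₀ = (0, 2, -1)` has a positive entry. -/

open Matrix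

theorem IsSemimonotone.of_upper_nonneg {n : ℕ} {A : Matrix (Fin n) (Fin n) ℝ}
    (hA : ∀ i j, i ≤ j → 0 ≤ A i j) : IsSemimonotone A := by
  intro x hx hne
  obtain ⟨i, hxi, hfirst⟩ : ∃ i, x i ≠ 0 ∧ ∀ j < i, x j = 0 := by
    obtain ⟨j, hj⟩ := Function.ne_iff.mp hne
    obtain ⟨i, hi, hmin⟩ := Finset.exists_min_image (Finset.univ.filter fun j => x j ≠ 0) id
      ⟨j, by simpa using hj⟩
    refine ⟨i, (Finset.mem_filter.mp hi).2, fun j hji => ?_⟩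
    by_contra hxj
    exact (hmin j (by simpa using hxj)).not_gt hji
  refine ⟨i, (hx i).lt_of_ne' hxi, ?_⟩
  simp only [mulVec, dotProduct]
  refine Finset.sum_nonneg fun j _ => ?_
  rcases lt_or_ge j i with hji | hij
  · simp [hfirst j hji]
  · exact mul_nonneg (hA i j hij) (hx j)

theorem not_isSemimonotoneStar_of_col_nonneg {n : ℕ} {B : Matrix (Fin n) (Fin n) ℝ} {k j : Fin n}
    (hcol : 0 ≤ B.col k) (hdiag : B k k = 0) (hpos : 0 < B k j) : ¬ IsSemimonotoneStar B := by
  rintro ⟨-, hstar⟩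
  have hBe : B *ᵥ Pi.single k 1 = B.col k := mulVec_single_one B k
  have hle := hstar (Pi.single k 1) (Pi.single_nonneg.2 zero_le_one) (hBe ▸ hcol)
    (by simp [hBe, single_dotProduct, hdiag]) j
  simp only [mulVec_single_one, col_apply, transpose_apply, Pi.zero_apply] at hle
  exact hle.not_gt hpos

theorem isSemimonotoneStar_example :
    IsSemimonotoneStar !![(0 : ℝ), 1, 1; 2, 0, 1; -1, -1, 0] := by
  refine ⟨.of_upper_nonneg fun i j hij => ?_, fun x hx hAx _ => ?_⟩
  · fin_cases i <;> fin_cases j <;> simp_all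
  have hlast : 0 ≤ -x 0 - x 1 := by
    simpa [mulVec, dotProduct, Fin.sum_univ_three, sub_eq_add_neg] using hAx 2
  have h0 : 0 ≤ x 0 := hx 0
  have h1 : 0 ≤ x 1 := hx 1
  have h2 : 0 ≤ x 2 := hx 2
  intro i
  fin_cases i <;> simp [mulVec, dotProduct, Fin.sum_univ_three, transpose] <;> linarith

theorem stmt3 :
    IsSemimonotoneStar !![(0 : ℝ), 1, 1; 2, 0, 1; -1, -1, 0] ∧
      ¬ IsSemimonotoneStar (!![(0 : ℝ), 1, 1; 2, 0, 1; -1, -1, 0]).transpose := by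
  refine ⟨isSemimonotoneStar_example, not_isSemimonotoneStar_of_col_nonneg (k := 0) (j := 1) ?_ ?_ ?_⟩
  · intro i
    fin_cases i <;> simp
  · simp
  · simp
end

section
/- The 3×3 matrix A = [[0,1,1],[2,0,1],[-1,-1,0]] is a semimonotone star matrix, but A + Aᵀ = [[0,3,0],[3,0,0],[0,0,0]] is not a semimonotone star matrix. -/
/-!
`A` has nonnegative rows except its last one, `(-1, -1, 0)`. A nonnegative `x` either has a
positive entry in a nonnegative row, or is a multiple of `e₂`, on which `(Ax)₂ = 0`; so `A ∈ E₀`.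
If moreover `Ax ≥ 0`, then `(Ax)₂ = -x₀ - x₁ ≥ 0` forces `x = x₂ e₂`, and `Aᵀx` is `x₂` times the
nonpositive last row. For `B = A + Aᵀ`, the vector `e₀` satisfies `Be₀ ≥ 0` and `e₀ᵀBe₀ = 0`,
but `(Bᵀe₀)₁ = 3 > 0`.
-/

namespace Matrix

variable {n : ℕ} {A : Matrix (Fin n) (Fin n) ℝ} {x : Fin n → ℝ} {i : Fin n}

lemma mulVec_apply_eq_of_forall_ne_eq_zero (hx : ∀ j ≠ i, x j = 0) (k : Fin n) :
    (A *ᵥ x) k = A k i * x i := by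
  simp only [mulVec, dotProduct]
  exact Finset.sum_eq_single_of_mem i (Finset.mem_univ i) fun j _ hj => by rw [hx j hj, mul_zero]

lemma isSemimonotone_of_other_rows_nonneg (i : Fin n) (hrows : ∀ k ≠ i, ∀ j, 0 ≤ A k j)
    (hii : 0 ≤ A i i) : IsSemimonotone A := by
  intro x hx hx0
  by_cases hpos : ∃ k ≠ i, 0 < x k
  · obtain ⟨k, hki, hxk⟩ := hpos
    exact ⟨k, hxk, show 0 ≤ ∑ j, A k j * x j from
      Finset.sum_nonneg fun j _ => mul_nonneg (hrows k hki j) (hx j)⟩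
  · push Not at hpos
    have hsupp : ∀ j ≠ i, x j = 0 := fun j hj => le_antisymm (hpos j hj) (hx j)
    have hxi : 0 < x i := by
      refine lt_of_le_of_ne (hx i) fun h => hx0 (funext fun j => ?_)
      by_cases hj : j = i
      · rw [hj, ← h]; rfl
      · exact hsupp j hj
    refine ⟨i, hxi, ?_⟩
    rw [mulVec_apply_eq_of_forall_ne_eq_zero hsupp]
    exact mul_nonneg hii hxi.le

lemma eq_zero_of_mulVec_apply_nonneg (hneg : ∀ j ≠ i, A i j < 0) (hii : A i i ≤ 0)
    (hx : 0 ≤ x) (hAx : 0 ≤ (A *ᵥ x) i) : ∀ j ≠ i, x j = 0 := by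
  have hterm : ∀ j ∈ Finset.univ, A i j * x j ≤ 0 := fun j _ => by
    by_cases hj : j = i
    · subst hj; exact mul_nonpos_of_nonpos_of_nonneg hii (hx j)
    · exact mul_nonpos_of_nonpos_of_nonneg (hneg j hj).le (hx j)
  have hsum : ∑ j, A i j * x j = 0 := le_antisymm (Finset.sum_nonpos hterm) hAx
  intro j hj
  have := (Finset.sum_eq_zero_iff_of_nonpos hterm).1 hsum j (Finset.mem_univ j)
  exact (mul_eq_zero.1 this).resolve_left (hneg j hj).ne

lemma isSemimonotoneStar_of_other_rows_nonneg (i : Fin n) (hrows : ∀ k ≠ i, ∀ j, 0 ≤ A k j)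
    (hneg : ∀ j ≠ i, A i j < 0) (hii : A i i = 0) : IsSemimonotoneStar A := by
  refine ⟨isSemimonotone_of_other_rows_nonneg i hrows hii.ge, fun x hx hAx _ k => ?_⟩
  have hsupp := eq_zero_of_mulVec_apply_nonneg hneg hii.le hx (hAx i)
  rw [mulVec_apply_eq_of_forall_ne_eq_zero hsupp, transpose_apply]
  refine mul_nonpos_of_nonpos_of_nonneg ?_ (hx i)
  by_cases hk : k = i
  · rw [hk, hii]
  · exact (hneg k hk).le

lemma not_isSemimonotoneStar_of_col_nonneg {j : Fin n} (hcol : ∀ k, 0 ≤ A k i)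
    (hii : A i i = 0) (hij : 0 < A i j) : ¬ IsSemimonotoneStar A := by
  rintro ⟨-, hstar⟩
  have hAe : A *ᵥ Pi.single i 1 = A.col i := mulVec_single_one A i
  have h := hstar (Pi.single i 1) (Pi.single_nonneg.2 zero_le_one) (by rw [hAe]; exact hcol)
    (by rw [hAe, single_dotProduct, one_mul, col_apply, hii])
  have := h j
  rw [mulVec_single_one, col_apply, transpose_apply] at this
  exact this.not_gt hij

end Matrix

open Matrix in
theorem stmt4 :
    IsSemimonotoneStar !![(0 : ℝ), 1, 1; 2, 0, 1; -1, -1, 0] ∧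
      (!![(0 : ℝ), 1, 1; 2, 0, 1; -1, -1, 0] +
        (!![(0 : ℝ), 1, 1; 2, 0, 1; -1, -1, 0]).transpose
          = !![(0 : ℝ), 3, 0; 3, 0, 0; 0, 0, 0]) ∧
      ¬ IsSemimonotoneStar !![(0 : ℝ), 3, 0; 3, 0, 0; 0, 0, 0] := by
  refine ⟨isSemimonotoneStar_of_other_rows_nonneg 2 ?_ ?_ (by simp), ?_,
    not_isSemimonotoneStar_of_col_nonneg (i := 0) (j := 1) ?_ (by simp) (by simp)⟩
  · intro k hk j
    fin_cases k <;> fin_cases j <;> simp at hk ⊢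
  · intro j hj
    fin_cases j <;> simp at hj ⊢
  · ext i j
    fin_cases i <;> fin_cases j <;> norm_num
  · intro k
    fin_cases k <;> simp
end

section
/- Every copositive plus matrix is an Ẽ_0^s-matrix, i.e. it is semimonotone star and for every solution x of LCP(0, A), (Aᵀx)_i ≠ 0 implies (Ax)_i ≠ 0 for all i. -/
/-- A is copositive plus (C₀⁺). -/
def IsCopositivePlus {n : ℕ} (A : Matrix (Fin n) (Fin n) ℝ) : Prop :=
  (∀ x : Fin n → ℝ, 0 ≤ x → 0 ≤ dotProduct x (A.mulVec x)) ∧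
    ∀ x : Fin n → ℝ, 0 ≤ x → dotProduct x (A.mulVec x) = 0 →
      (A + A.transpose).mulVec x = 0

/-- A is an Ẽ₀ˢ-matrix. -/
def IsE0sTilde {n : ℕ} (A : Matrix (Fin n) (Fin n) ℝ) : Prop :=
  IsSemimonotoneStar A ∧
    ∀ x : Fin n → ℝ, 0 ≤ x → 0 ≤ A.mulVec x → dotProduct x (A.mulVec x) = 0 →
      ∀ i, A.transpose.mulVec x i ≠ 0 → A.mulVec x i ≠ 0

/-! On a nonnegative zero `x` of the quadratic form, the "plus" condition `(A + Aᵀ) x = 0` says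
`Aᵀ x = -A x`, which gives both `Aᵀ x ≤ 0` and the sign condition of `Ẽ₀ˢ` when `A x ≥ 0`.
Semimonotonicity is copositivity alone: if `(A x)ᵢ < 0` wherever `xᵢ > 0`, then `xᵀ A x < 0`. -/

open Matrix

section

variable {n : ℕ} {A : Matrix (Fin n) (Fin n) ℝ}

theorem isSemimonotone_of_copositive (hA : ∀ x : Fin n → ℝ, 0 ≤ x → 0 ≤ x ⬝ᵥ A *ᵥ x) :
    IsSemimonotone A := by
  intro x hx hx0
  by_contra! hneg
  obtain ⟨j, hj⟩ := Function.ne_iff.mp hx0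
  have hxj : 0 < x j := (hx j).lt_of_ne' hj
  have hterm (i : Fin n) : x i * (A *ᵥ x) i ≤ 0 := by
    rcases (hx i).eq_or_lt with hxi | hxi
    · simp [← hxi]
    · exact (mul_neg_of_pos_of_neg hxi (hneg i hxi)).le
  have hquad_neg : x ⬝ᵥ A *ᵥ x < 0 :=
    Finset.sum_neg' (fun i _ => hterm i)
      ⟨j, Finset.mem_univ j, mul_neg_of_pos_of_neg hxj (hneg j hxj)⟩
  exact hquad_neg.not_ge (hA x hx)

theorem IsCopositivePlus.transpose_mulVec_eq_neg (hA : IsCopositivePlus A) {x : Fin n → ℝ}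
    (hx : 0 ≤ x) (hxAx : x ⬝ᵥ A *ᵥ x = 0) : Aᵀ *ᵥ x = -(A *ᵥ x) :=
  eq_neg_of_add_eq_zero_right (by rw [← add_mulVec]; exact hA.2 x hx hxAx)

theorem IsCopositivePlus.isSemimonotoneStar (hA : IsCopositivePlus A) : IsSemimonotoneStar A :=
  ⟨isSemimonotone_of_copositive hA.1, fun x hx hAx hxAx => by
    rw [hA.transpose_mulVec_eq_neg hx hxAx]
    exact neg_nonpos.mpr hAx⟩

end

theorem stmt9 {n : ℕ} (A : Matrix (Fin n) (Fin n) ℝ)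
    (hA : IsCopositivePlus A) : IsE0sTilde A := by
  refine ⟨hA.isSemimonotoneStar, fun x hx _ hxAx i hi => ?_⟩
  rwa [hA.transpose_mulVec_eq_neg hx hxAx, Pi.neg_apply, neg_ne_zero] at hi
end

section
/- The 3×3 matrix A = [[1,-1,-2],[-1,1,0],[0,0,1]] is a semimonotone star matrix but is not an Ẽ_0^s-matrix: the vector x = (1,1,0)ᵀ solves LCP(0, A) and satisfies (Aᵀx)_3 = -2 ≠ 0 while (Ax)_3 = 0. -/
/-!
For `x ≥ 0` the first two entries of `A x` are `x₀ - x₁ - 2x₂` and `x₁ - x₀`. If both are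
nonnegative, adding them gives `x₂ = 0` and then `x₀ = x₁`, so `Aᵀ x = (0, 0, -2x₀) ≤ 0`; this is the
star condition. Semimonotonicity is witnessed by the third index when `x₂ > 0`, and otherwise by the
larger of `x₀, x₁`. The vector `(1, 1, 0)` lies in the kernel of `A`, hence in `SOL(0, A)`, while
`(Aᵀ (1, 1, 0))₂ = -2`.
-/

open Matrix

namespace E0sTildeCounterexample

local notation "𝔸" => !![(1 : ℝ), -1, -2; -1, 1, 0; 0, 0, 1]

theorem mulVec_eq (x : Fin 3 → ℝ) : 𝔸 *ᵥ x = ![x 0 - x 1 - 2 * x 2, x 1 - x 0, x 2] := by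
  ext i
  fin_cases i <;> simp [mulVec, dotProduct, Fin.sum_univ_three] <;> ring

theorem transpose_mulVec_eq (x : Fin 3 → ℝ) :
    𝔸ᵀ *ᵥ x = ![x 0 - x 1, x 1 - x 0, x 2 - 2 * x 0] := by
  ext i
  fin_cases i <;> simp [mulVec, dotProduct, Fin.sum_univ_three] <;> ring

theorem isSemimonotone : IsSemimonotone 𝔸 := by
  intro x hx hx_ne
  have hx0 : 0 ≤ x 0 := hx 0
  have hx1 : 0 ≤ x 1 := hx 1
  have hx2 : 0 ≤ x 2 := hx 2
  simp only [mulVec_eq]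
  rcases hx2.lt_or_eq with h2 | h2
  · exact ⟨2, h2, by simpa using h2.le⟩
  have hx01 : 0 < x 0 ∨ 0 < x 1 := by
    by_contra! h
    exact hx_ne (funext fun i => by fin_cases i <;> simp <;> linarith)
  rcases le_total (x 1) (x 0) with h | h
  · exact ⟨0, by rcases hx01 with h' | h' <;> linarith, by simp; linarith⟩
  · exact ⟨1, by rcases hx01 with h' | h' <;> linarith, by simp; linarith⟩

theorem isSemimonotoneStar : IsSemimonotoneStar 𝔸 := by
  refine ⟨isSemimonotone, fun x hx hAx _ i => ?_⟩
  have hx0 : 0 ≤ x 0 := hx 0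
  have hx2 : 0 ≤ x 2 := hx 2
  have h0 : 0 ≤ (𝔸 *ᵥ x) 0 := hAx 0
  have h1 : 0 ≤ (𝔸 *ᵥ x) 1 := hAx 1
  simp only [mulVec_eq, cons_val_zero, cons_val_one] at h0 h1
  have h2 : x 2 = 0 := by linarith
  rw [transpose_mulVec_eq]
  fin_cases i <;> simp <;> linarith

theorem mulVec_one_one_zero : 𝔸 *ᵥ ![1, 1, 0] = 0 := by
  rw [mulVec_eq]
  ext i
  fin_cases i <;> simp [cons_val]

theorem one_one_zero_mem_sol :
    0 ≤ ![(1 : ℝ), 1, 0] ∧ 0 ≤ 𝔸 *ᵥ ![1, 1, 0] ∧ ![1, 1, 0] ⬝ᵥ (𝔸 *ᵥ ![1, 1, 0]) = 0 := by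
  refine ⟨fun i => ?_, mulVec_one_one_zero.ge, by rw [mulVec_one_one_zero, dotProduct_zero]⟩
  fin_cases i <;> simp

theorem transpose_mulVec_one_one_zero : 𝔸ᵀ *ᵥ ![1, 1, 0] = ![0, 0, -2] := by
  rw [transpose_mulVec_eq]
  ext i
  fin_cases i <;> simp [cons_val]

end E0sTildeCounterexample

open E0sTildeCounterexample

theorem stmt10 :
    IsSemimonotoneStar !![(1 : ℝ), -1, -2; -1, 1, 0; 0, 0, 1] ∧
      ¬ IsE0sTilde !![(1 : ℝ), -1, -2; -1, 1, 0; 0, 0, 1] ∧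
      (0 ≤ (![1, 1, 0] : Fin 3 → ℝ) ∧
        0 ≤ (!![(1 : ℝ), -1, -2; -1, 1, 0; 0, 0, 1]).mulVec ![1, 1, 0] ∧
        dotProduct (![1, 1, 0] : Fin 3 → ℝ)
          ((!![(1 : ℝ), -1, -2; -1, 1, 0; 0, 0, 1]).mulVec ![1, 1, 0]) = 0) ∧
      (!![(1 : ℝ), -1, -2; -1, 1, 0; 0, 0, 1]).transpose.mulVec ![1, 1, 0] 2 = -2 ∧
      (!![(1 : ℝ), -1, -2; -1, 1, 0; 0, 0, 1]).mulVec ![1, 1, 0] 2 = 0 := by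
  obtain ⟨hx, hAx, hxAx⟩ := one_one_zero_mem_sol
  have hAtx : (!![(1 : ℝ), -1, -2; -1, 1, 0; 0, 0, 1]).transpose.mulVec ![1, 1, 0] 2 = -2 := by
    rw [transpose_mulVec_one_one_zero]
    rfl
  have hAxi := congrFun mulVec_one_one_zero 2
  refine ⟨isSemimonotoneStar, fun h => ?_, ⟨hx, hAx, hxAx⟩, hAtx, hAxi⟩
  exact h.2 _ hx hAx hxAx 2 (by rw [hAtx]; norm_num) hAxi
end

section
/- Let A ∈ Ẽ_0^s. Then A is an L₂-matrix: for every nonzero x ≥ 0 with Ax ≥ 0 and xᵀAx = 0, there exist nonnegative diagonal matrices D₁ and D₂ such that D₂x ≠ 0 and (D₁A + AᵀD₂)x = 0. (Take D₂ = I and (D₁)_{ii} = −(Aᵀx)_i/(Ax)_i when (Ax)_i ≠ 0, and 0 otherwise.) -/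
theorem exists_nonneg_mul_add_eq_zero {ι : Type*} {u v : ι → ℝ} (hu : 0 ≤ u) (hv : v ≤ 0)
    (hsupp : ∀ i, v i ≠ 0 → u i ≠ 0) : ∃ d : ι → ℝ, 0 ≤ d ∧ d * u + v = 0 := by
  refine ⟨-v / u, fun i => div_nonneg (neg_nonneg.2 (hv i)) (hu i), funext fun i => ?_⟩
  -- where `u i = 0` the quotient is the junk value `0`, and `v i = 0` by `hsupp`
  by_cases hui : u i = 0
  · simp [hui, not_imp_not.1 (hsupp i) hui]
  · simp [div_mul_cancel₀ _ hui]

namespace Matrix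

theorem diagonal_mul_add_transpose_one_mulVec {ι : Type*} [Fintype ι] [DecidableEq ι]
    (A : Matrix ι ι ℝ) (d x : ι → ℝ) :
    (diagonal d * A + Aᵀ * 1) *ᵥ x = d * (A *ᵥ x) + Aᵀ *ᵥ x := by
  ext i
  rw [Matrix.mul_one, add_mulVec, ← mulVec_mulVec, Pi.add_apply, mulVec_diagonal]
  rfl

end Matrix

theorem stmt14 {n : ℕ} (A : Matrix (Fin n) (Fin n) ℝ) (hA : IsE0sTilde A) :
    ∀ x : Fin n → ℝ, 0 ≤ x → x ≠ 0 → 0 ≤ A.mulVec x →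
      dotProduct x (A.mulVec x) = 0 →
      ∃ D₁ D₂ : Matrix (Fin n) (Fin n) ℝ, D₁.IsDiag ∧ D₂.IsDiag ∧
        (∀ i, 0 ≤ D₁ i i) ∧ (∀ i, 0 ≤ D₂ i i) ∧ D₂.mulVec x ≠ 0 ∧
        (D₁ * A + A.transpose * D₂).mulVec x = 0 := by
  intro x hx hx0 hAx hdot
  obtain ⟨d, hd_nonneg, hd⟩ := exists_nonneg_mul_add_eq_zero hAx (hA.1.2 x hx hAx hdot)
    (hA.2 x hx hAx hdot)
  refine ⟨Matrix.diagonal d, 1, Matrix.isDiag_diagonal d, Matrix.isDiag_one,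
    fun i => by simpa using hd_nonneg i, fun i => by simp, by simpa using hx0, ?_⟩
  rw [Matrix.diagonal_mul_add_transpose_one_mulVec, hd]
end

section
/- Let A ∈ R^{n×n} (n ≥ 2) be a block matrix of the form A = [[B, b],[−cᵀ, 0]] where B ∈ R^{(n−1)×(n−1)} is semimonotone, b ∈ R^{n−1} has all entries strictly positive, and c ∈ R^{n−1} has all entries strictly positive. Then A is semimonotone. -/
theorem stmt15 {m : ℕ} (hm : 1 ≤ m)
    (A : Matrix (Fin (m + 1)) (Fin (m + 1)) ℝ)
    (B : Matrix (Fin m) (Fin m) ℝ) (b c : Fin m → ℝ)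
    (hB : IsSemimonotone B) (hb : ∀ i, 0 < b i) (hc : ∀ j, 0 < c j)
    (hblk₁ : ∀ i j : Fin m, A i.castSucc j.castSucc = B i j)
    (hblk₂ : ∀ i : Fin m, A i.castSucc (Fin.last m) = b i)
    (hblk₃ : ∀ j : Fin m, A (Fin.last m) j.castSucc = -c j)
    (hblk₄ : A (Fin.last m) (Fin.last m) = 0) :
    IsSemimonotone A := by
  intro x hx hx0
  set y : Fin m → ℝ := fun i => x i.castSucc with hy
  by_cases hy0 : y = 0
  · -- top part zero, so x (last m) > 0
    have hxl : 0 < x (Fin.last m) := by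
      rcases lt_or_eq_of_le (hx (Fin.last m)) with h | h
      · exact h
      · exfalso; apply hx0
        funext j
        induction j using Fin.lastCases with
        | last => exact h.symm
        | cast i => exact congrFun hy0 i
    refine ⟨Fin.last m, hxl, ?_⟩
    have : A.mulVec x (Fin.last m) = 0 := by
      simp only [Matrix.mulVec, dotProduct]
      rw [Fin.sum_univ_castSucc]
      have : ∀ j : Fin m, A (Fin.last m) j.castSucc * x j.castSucc = 0 := by
        intro j
        have : x j.castSucc = 0 := congrFun hy0 j
        rw [this, mul_zero]
      rw [Finset.sum_congr rfl (fun j _ => this j), hblk₄]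
      simp
    rw [this]
  · have hy' : 0 ≤ y := fun i => hx i.castSucc
    obtain ⟨i, hyi, hBy⟩ := hB y hy' hy0
    refine ⟨i.castSucc, hyi, ?_⟩
    have hcalc : A.mulVec x i.castSucc = B.mulVec y i + b i * x (Fin.last m) := by
      simp only [Matrix.mulVec, dotProduct]
      rw [Fin.sum_univ_castSucc, hblk₂]
      congr 1
      exact Finset.sum_congr rfl (fun j _ => by rw [hblk₁])
    rw [hcalc]
    have := mul_nonneg (hb i).le (hx (Fin.last m))
    linarith
end

section
/- Let A ∈ R^{n×n} (n ≥ 2) be a block matrix A = [[B, b],[−cᵀ, 0]] where B ∈ R^{(n−1)×(n−1)} is a P₀-matrix, b > 0 and c > 0 componentwise. Then every solution x of LCP(0, A) (i.e. x ≥ 0, Ax ≥ 0, xᵀAx = 0) has x_i = 0 for all i < n; that is, x = (0,…,0,t)ᵀ for some t ≥ 0, and for such x, Aᵀx ≤ 0. -/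
/-- B is a P₀-matrix: all principal minors are nonnegative. -/
def IsP0Matrix {m : ℕ} (B : Matrix (Fin m) (Fin m) ℝ) : Prop :=
  ∀ s : Finset (Fin m),
    0 ≤ (B.submatrix (fun i : s => (i : Fin m)) (fun j : s => (j : Fin m))).det

open Matrix

/-!
The last row of `A` is `(-cᵀ, 0)`, so the last coordinate of `A x` is `-c ⬝ᵥ x_B`, where `x_B` are
the first `m` coordinates of `x`. Since `c > 0` and `x ≥ 0`, the condition `A x ≥ 0` forces
`x_B = 0`. Then `x = t eₙ` with `t = xₙ ≥ 0`, and `Aᵀ x = t · (last row of A) = t (-cᵀ, 0) ≤ 0`.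
-/

theorem eq_zero_of_dotProduct_nonpos_of_pos {ι R : Type*} [Fintype ι] [Field R] [LinearOrder R]
    [IsStrictOrderedRing R] {c x : ι → R} (hc : ∀ i, 0 < c i) (hx : 0 ≤ x) (h : c ⬝ᵥ x ≤ 0) :
    x = 0 := by
  have hterm : ∀ i ∈ Finset.univ, 0 ≤ c i * x i := fun i _ => mul_nonneg (hc i).le (hx i)
  have hsum : c ⬝ᵥ x = 0 := le_antisymm h (Finset.sum_nonneg hterm)
  funext i
  have := (Finset.sum_eq_zero_iff_of_nonneg hterm).mp hsum i (Finset.mem_univ i)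
  exact (mul_eq_zero.mp this).resolve_left (hc i).ne'

theorem Fin.eq_pi_single_last_of_castSucc_eq_zero {m : ℕ} {R : Type*} [Zero R]
    {x : Fin (m + 1) → R} (hx : ∀ i : Fin m, x i.castSucc = 0) :
    x = Pi.single (Fin.last m) (x (Fin.last m)) := by
  funext i
  induction i using Fin.lastCases with
  | last => simp
  | cast j => simp [hx j, (Fin.castSucc_lt_last j).ne]

theorem Matrix.mulVec_apply_last {m : ℕ} {R : Type*} [NonUnitalNonAssocSemiring R]
    (A : Matrix (Fin (m + 1)) (Fin (m + 1)) R) (x : Fin (m + 1) → R) :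
    (A *ᵥ x) (Fin.last m) = (fun j : Fin m => A (Fin.last m) j.castSucc) ⬝ᵥ (fun j => x j.castSucc)
      + A (Fin.last m) (Fin.last m) * x (Fin.last m) := by
  simp only [mulVec, dotProduct, Fin.sum_univ_castSucc]

theorem stmt16_general {m : ℕ}
    (A : Matrix (Fin (m + 1)) (Fin (m + 1)) ℝ)
    (c : Fin m → ℝ)
    (hc : ∀ j, 0 < c j)
    (hblk₃ : ∀ j : Fin m, A (Fin.last m) j.castSucc = -c j)
    (hblk₄ : A (Fin.last m) (Fin.last m) = 0) :
    ∀ x : Fin (m + 1) → ℝ, 0 ≤ x → 0 ≤ A.mulVec x →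
      dotProduct x (A.mulVec x) = 0 →
      (∀ i : Fin m, x i.castSucc = 0) ∧
      (∃ t : ℝ, 0 ≤ t ∧ x = fun i => if i = Fin.last m then t else 0) ∧
      A.transpose.mulVec x ≤ 0 := by
  intro x hx hAx _
  have hlast : (A *ᵥ x) (Fin.last m) = -(c ⬝ᵥ fun j => x j.castSucc) := by
    rw [mulVec_apply_last, hblk₄, zero_mul, add_zero, ← neg_dotProduct]
    exact congrArg (· ⬝ᵥ _) (funext hblk₃)
  have hxB : (fun j : Fin m => x j.castSucc) = 0 :=
    eq_zero_of_dotProduct_nonpos_of_pos hc (fun j => hx _) (by simpa [hlast] using hAx (Fin.last m))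
  have hx_single := Fin.eq_pi_single_last_of_castSucc_eq_zero (congrFun hxB)
  refine ⟨congrFun hxB, ⟨x (Fin.last m), hx _, hx_single.trans (funext fun i => Pi.single_apply ..)⟩, ?_⟩
  intro i
  rw [hx_single, mulVec, dotProduct_single, transpose_apply]
  induction i using Fin.lastCases with
  | last => simp [hblk₄]
  | cast j => simpa [hblk₃] using mul_nonneg (hc j).le (hx (Fin.last m))

theorem stmt16 {m : ℕ} (hm : 1 ≤ m)
    (A : Matrix (Fin (m + 1)) (Fin (m + 1)) ℝ)
    (B : Matrix (Fin m) (Fin m) ℝ) (b c : Fin m → ℝ)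
    (hB : IsP0Matrix B) (hb : ∀ i, 0 < b i) (hc : ∀ j, 0 < c j)
    (hblk₁ : ∀ i j : Fin m, A i.castSucc j.castSucc = B i j)
    (hblk₂ : ∀ i : Fin m, A i.castSucc (Fin.last m) = b i)
    (hblk₃ : ∀ j : Fin m, A (Fin.last m) j.castSucc = -c j)
    (hblk₄ : A (Fin.last m) (Fin.last m) = 0) :
    ∀ x : Fin (m + 1) → ℝ, 0 ≤ x → 0 ≤ A.mulVec x →
      dotProduct x (A.mulVec x) = 0 →
      (∀ i : Fin m, x i.castSucc = 0) ∧
      (∃ t : ℝ, 0 ≤ t ∧ x = fun i => if i = Fin.last m then t else 0) ∧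
      A.transpose.mulVec x ≤ 0 :=
  stmt16_general A c hc hblk₃ hblk₄
end

section
/- Suppose A ∈ R^{n×n} is semimonotone star and there exists x > 0 with Ax > 0 (value of the matrix game is positive, so A is a Q-matrix in the relevant sense). Then LCP(0, A) has only the trivial solution, i.e. A is an R₀-matrix. -/
namespace Matrix

variable {ι m n R : Type*} [Fintype ι] [Fintype m] [Fintype n]
  [CommRing R] [PartialOrder R] [IsStrictOrderedRing R]

lemma dotProduct_pos_of_nonneg_of_ne_zero {v w : ι → R} (hv : 0 ≤ v) (hv0 : v ≠ 0)
    (hw : ∀ i, 0 < w i) : 0 < v ⬝ᵥ w := by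
  obtain ⟨j, hj⟩ := Function.ne_iff.mp hv0
  have hvj : 0 < v j := lt_of_le_of_ne (hv j) (Ne.symm hj)
  exact Finset.sum_pos' (fun i _ => mul_nonneg (hv i) (hw i).le)
    ⟨j, Finset.mem_univ j, mul_pos hvj (hw j)⟩

-- The easy half of Gordan's alternative.
lemma not_transpose_mulVec_nonpos (A : Matrix m n R) {x : m → R} (hx : 0 ≤ x) (hx0 : x ≠ 0)
    {y : n → R} (hy : 0 ≤ y) (hAy : ∀ i, 0 < (A *ᵥ y) i) : ¬ Aᵀ *ᵥ x ≤ 0 := by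
  intro hATx
  have hpos : 0 < x ⬝ᵥ A *ᵥ y := dotProduct_pos_of_nonneg_of_ne_zero hx hx0 hAy
  have hnonpos : x ⬝ᵥ A *ᵥ y ≤ 0 := by
    calc x ⬝ᵥ A *ᵥ y = Aᵀ *ᵥ x ⬝ᵥ y := by rw [dotProduct_mulVec, mulVec_transpose]
      _ ≤ 0 ⬝ᵥ y := dotProduct_le_dotProduct_of_nonneg_right hATx hy
      _ = 0 := zero_dotProduct y
  exact hnonpos.not_gt hpos

end Matrix

theorem stmt17 {n : ℕ} (A : Matrix (Fin n) (Fin n) ℝ)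
    (hA : IsSemimonotoneStar A)
    (hQ : ∃ x : Fin n → ℝ, (∀ i, 0 < x i) ∧ (∀ i, 0 < A.mulVec x i)) :
    ∀ z : Fin n → ℝ, 0 ≤ z → 0 ≤ A.mulVec z →
      dotProduct z (A.mulVec z) = 0 → z = 0 := by
  intro z hz hAz hzAz
  by_contra hz0
  obtain ⟨y, hy, hAy⟩ := hQ
  exact A.not_transpose_mulVec_nonpos hz hz0 (fun i => (hy i).le) hAy (hA.2 z hz hAz hzAz)
end

section
/- Let A ∈ R^{n×n} be semimonotone, let z, w > 0 in R^n, and let κ > max(n, zᵀw/min_i(z_i w_i)). With ψ(z,w) = κ·log(zᵀw) − Σ_i log(z_i w_i), the vector r = ∇_z ψ + Aᵀ ∇_w ψ is nonzero. -/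
/-!
Both gradients are positive because `κ / zᵀw > 1 / min_i z_i w_i ≥ 1 / (z_i w_i)`, so the
theorem reduces to the fact that `Aᵀ` is again semimonotone.

For that, let `u ≥ 0` have support `β` and `(Aᵀu)_i < 0` on `β`. A saddle point of the matrix
game `(x, y) ↦ yᵀ A x` on the face of the standard simplex spanned by `β` (von Neumann's minimax
theorem) turns semimonotonicity of `A` into a `y ≥ 0` on that face with `(Aᵀy)_i ≥ 0` on `β`
(Ville's alternative). Then `u - s y`, with `s` the largest step keeping it nonnegative, is a
counterexample of strictly smaller support.
-/

open Finset Function Matrix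

theorem Matrix.exists_isSaddlePointOn_dotProduct_mulVec {ι κ : Type*} [Fintype ι] [Fintype κ]
    (M : Matrix ι κ ℝ) {X : Set (κ → ℝ)} {Y : Set (ι → ℝ)}
    (hX : X.Nonempty) (cX : Convex ℝ X) (kX : IsCompact X)
    (hY : Y.Nonempty) (cY : Convex ℝ Y) (kY : IsCompact Y) :
    ∃ a ∈ X, ∃ b ∈ Y, IsSaddlePointOn X Y (fun x y => y ⬝ᵥ M *ᵥ x) a b := by
  classical
  let B := toLinearMap₂' ℝ (S₁ := ℝ) (S₂ := ℝ) M
  have hB : ∀ x y, y ⬝ᵥ M *ᵥ x = B y x := fun x y => (toLinearMap₂'_apply' M y x).symm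
  simp only [hB]
  exact Sion.exists_isSaddlePointOn hX cX kX
    (fun y _ => (B y).continuous_of_finiteDimensional.lowerSemicontinuous.lowerSemicontinuousOn _)
    (fun y _ => ((B y).convexOn cX).quasiconvexOn) cY hY kY
    (fun x _ =>
      (B.flip x).continuous_of_finiteDimensional.upperSemicontinuous.upperSemicontinuousOn _)
    (fun x _ => ((B.flip x).concaveOn cY).quasiconcaveOn)

section FaceStdSimplex

variable {ι : Type*} [Fintype ι] {β : Set ι}

def faceStdSimplex (β : Set ι) : Set (ι → ℝ) :=
  stdSimplex ℝ ι ∩ βᶜ.pi fun _ => {0}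

theorem convex_faceStdSimplex : Convex ℝ (faceStdSimplex β) :=
  (convex_stdSimplex ℝ ι).inter (convex_pi fun _ _ => convex_singleton 0)

theorem isCompact_faceStdSimplex : IsCompact (faceStdSimplex β) :=
  (isCompact_stdSimplex ℝ ι).inter_right (isClosed_set_pi fun _ _ => isClosed_singleton)

theorem single_mem_faceStdSimplex [DecidableEq ι] {i : ι} (hi : i ∈ β) :
    Pi.single i 1 ∈ faceStdSimplex β :=
  ⟨single_mem_stdSimplex ℝ i, fun j hj => Pi.single_eq_of_ne (by rintro rfl; exact hj hi) _⟩

theorem faceStdSimplex_nonempty (hβ : β.Nonempty) : (faceStdSimplex β).Nonempty := by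
  classical
  exact ⟨_, single_mem_faceStdSimplex hβ.some_mem⟩

variable {x : ι → ℝ}

theorem nonneg_of_mem_faceStdSimplex (hx : x ∈ faceStdSimplex β) : 0 ≤ x := hx.1.1

theorem ne_zero_of_mem_faceStdSimplex (hx : x ∈ faceStdSimplex β) : x ≠ 0 := by
  rintro rfl
  simpa using hx.1.2

theorem support_subset_of_mem_faceStdSimplex (hx : x ∈ faceStdSimplex β) : support x ⊆ β :=
  fun i hi => by_contra fun hiβ => hi (hx.2 i hiβ)

end FaceStdSimplex

theorem exists_mem_faceStdSimplex_transpose_mulVec_nonneg {ι : Type*} [Fintype ι]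
    (M : Matrix ι ι ℝ) {β : Set ι} (hβ : β.Nonempty)
    (h : ∀ x ∈ faceStdSimplex β, ∃ i ∈ β, 0 ≤ (M *ᵥ x) i) :
    ∃ y ∈ faceStdSimplex β, ∀ j ∈ β, 0 ≤ (Mᵀ *ᵥ y) j := by
  classical
  have hΔ := faceStdSimplex_nonempty hβ
  obtain ⟨a, ha, b, hb, hab⟩ := M.exists_isSaddlePointOn_dotProduct_mulVec
    hΔ convex_faceStdSimplex isCompact_faceStdSimplex
    hΔ convex_faceStdSimplex isCompact_faceStdSimplex
  obtain ⟨i, hi, hMa⟩ := h a ha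
  refine ⟨b, hb, fun j hj => ?_⟩
  calc 0 ≤ (M *ᵥ a) i := hMa
    _ = Pi.single i 1 ⬝ᵥ M *ᵥ a := by simp
    _ ≤ b ⬝ᵥ M *ᵥ Pi.single j 1 :=
      hab _ (single_mem_faceStdSimplex hj) _ (single_mem_faceStdSimplex hi)
    _ = (Mᵀ *ᵥ b) j := by rw [mulVec_single_one, mulVec, dotProduct_comm]; rfl

theorem exists_pos_sub_smul_nonneg_support_ssubset {ι : Type*} [Fintype ι] {u y : ι → ℝ}
    (hu : 0 ≤ u) (hy : 0 ≤ y) (hy0 : y ≠ 0) (hyu : support y ⊆ support u) :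
    ∃ s : ℝ, 0 < s ∧ 0 ≤ u - s • y ∧ support (u - s • y) ⊂ support u := by
  classical
  have hγ : (univ.filter fun i => 0 < y i).Nonempty := by
    obtain ⟨i, hi⟩ := Function.ne_iff.mp hy0
    exact ⟨i, mem_filter.2 ⟨mem_univ i, (hy i).lt_of_ne' hi⟩⟩
  obtain ⟨i₀, hi₀, hmin⟩ := exists_min_image _ (fun i => u i / y i) hγ
  have hyi₀ : 0 < y i₀ := (mem_filter.1 hi₀).2
  have hui₀ : 0 < u i₀ := (hu i₀).lt_of_ne' (hyu hyi₀.ne')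
  refine ⟨u i₀ / y i₀, div_pos hui₀ hyi₀, fun i => ?_, ?_⟩
  · rcases (hy i).eq_or_lt with hyi | hyi
    · simpa [← hyi] using hu i
    · have := hmin i (mem_filter.2 ⟨mem_univ i, hyi⟩)
      rw [le_div_iff₀ hyi] at this
      simpa using this
  · refine (Set.ssubset_iff_of_subset fun i hi => ?_).2
      ⟨i₀, hui₀.ne', by simp [div_mul_cancel₀ _ hyi₀.ne']⟩
    by_contra hui
    have hyi : y i = 0 := by_contra fun h => hui (hyu h)
    exact hi (by simp [notMem_support.1 hui, hyi])

theorem IsSemimonotone.transpose {n : ℕ} {A : Matrix (Fin n) (Fin n) ℝ} (hA : IsSemimonotone A) :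
    IsSemimonotone Aᵀ := by
  intro u hu hu0
  induction hβ : support u using WellFoundedLT.induction generalizing u with
  | ind β ih =>
  subst hβ
  by_contra! hneg
  obtain ⟨y, hy, hAy⟩ := exists_mem_faceStdSimplex_transpose_mulVec_nonneg A
    (Function.support_nonempty_iff.2 hu0) fun x hx => by
      obtain ⟨i, hi, hAi⟩ :=
        hA x (nonneg_of_mem_faceStdSimplex hx) (ne_zero_of_mem_faceStdSimplex hx)
      exact ⟨i, support_subset_of_mem_faceStdSimplex hx hi.ne', hAi⟩
  obtain ⟨s, hs, hus, hsupp⟩ := exists_pos_sub_smul_nonneg_support_ssubset hu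
    (nonneg_of_mem_faceStdSimplex hy) (ne_zero_of_mem_faceStdSimplex hy)
    (support_subset_of_mem_faceStdSimplex hy)
  have hneg' : ∀ i ∈ support u, (Aᵀ *ᵥ (u - s • y)) i < 0 := fun i hi => by
    simp only [mulVec_sub, mulVec_smul, Pi.sub_apply, Pi.smul_apply, smul_eq_mul]
    linarith [hneg i ((hu i).lt_of_ne' hi), mul_nonneg hs.le (hAy i hi)]
  have hne : u - s • y ≠ 0 := fun h => by
    obtain ⟨i, hi⟩ := Function.support_nonempty_iff.2 hu0
    simpa [h] using hneg' i hi
  obtain ⟨i, hi, hAi⟩ := ih _ hsupp (u - s • y) hus hne rfl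
  exact (hneg' i (hsupp.subset hi.ne')).not_ge hAi

theorem one_div_lt_div_of_div_inf'_lt {ι : Type*} {s : Finset ι} (hs : s.Nonempty) {p : ι → ℝ}
    (hp : ∀ i ∈ s, 0 < p i) {a κ : ℝ} (ha : 0 < a) (h : a / s.inf' hs p < κ) {i : ι}
    (hi : i ∈ s) : 1 / p i < κ / a := by
  have hm : 0 < s.inf' hs p := (lt_inf'_iff hs).2 hp
  calc 1 / p i ≤ 1 / s.inf' hs p := one_div_le_one_div_of_le hm (inf'_le p hi)
    _ < κ / a := by rw [div_lt_div_iff₀ hm ha, one_mul]; rwa [div_lt_iff₀ hm] at h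

theorem stmt19 {n : ℕ} (hn : 0 < n) (A : Matrix (Fin n) (Fin n) ℝ)
    (hA : IsSemimonotone A) (z w : Fin n → ℝ)
    (hz : ∀ i, 0 < z i) (hw : ∀ i, 0 < w i) (κ : ℝ)
    (hκ : max (n : ℝ)
        (dotProduct z w /
          (Finset.univ.inf' (Finset.univ_nonempty_iff.mpr (Fin.pos_iff_nonempty.mp hn))
            fun i => z i * w i)) < κ) :
    (fun i => w i * (κ / dotProduct z w - 1 / (z i * w i))) +
      A.transpose.mulVec
        (fun i => z i * (κ / dotProduct z w - 1 / (z i * w i))) ≠ 0 := by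
  set t : Fin n → ℝ := fun i => κ / z ⬝ᵥ w - 1 / (z i * w i)
  have hzw : 0 < z ⬝ᵥ w := sum_pos (fun i _ => mul_pos (hz i) (hw i)) ⟨⟨0, hn⟩, mem_univ _⟩
  have ht : ∀ i, 0 < t i := fun i => sub_pos.2 <|
    one_div_lt_div_of_div_inf'_lt _ (fun i _ => mul_pos (hz i) (hw i)) hzw
      ((le_max_right _ _).trans_lt hκ) (mem_univ i)
  obtain ⟨j, -, hj⟩ := hA.transpose (fun i => z i * t i) (fun i => (mul_pos (hz i) (ht i)).le)
    fun h => (mul_pos (hz ⟨0, hn⟩) (ht _)).ne' (congrFun h _)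
  intro hr
  have hrj := congrFun hr j
  simp only [Pi.add_apply, Pi.zero_apply] at hrj
  linarith [mul_pos (hw j) (ht j)]
end
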